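/- arXiv:1207.2649 — 6 statements merged into one kernel-verified Lean document; each statement's English description precedes it below -/
import Mathlib

section
/- If G and H are orbit-equivalent permutation groups on X with H ≤ G, then every G-invariant equivalence relation on X is H-invariant and conversely; in particular G is primitive if and only if H is primitive. -/
def IsPrimitive {X : Type*} (G : Subgroup (Equiv.Perm X)) : Prop :=
  (∀ x y : X, ∃ g ∈ G, g x = y) ∧
  ∀ r : Setoid X, (∀ g ∈ G, ∀ x y : X, r.r x y → r.r (g x) (g y)) →
    (∀ x y : X, r.r x y → x = y) ∨ (∀ x y : X, r.r x y)

/-- orbit-equivalent groups preserve the same equivalence relations;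
    G primitive iff H primitive. -/
theorem stmt1 {X : Type*} [DecidableEq X] (G H : Subgroup (Equiv.Perm X)) (hle : H ≤ G)
    (horb : ∀ s t : Finset X, (∃ g ∈ G, s.image g = t) ↔ ∃ h ∈ H, s.image h = t) :
    (∀ r : Setoid X,
      ((∀ g ∈ G, ∀ x y : X, r.r x y → r.r (g x) (g y)) ↔
       (∀ h ∈ H, ∀ x y : X, r.r x y → r.r (h x) (h y)))) ∧
    (IsPrimitive G ↔ IsPrimitive H) := by

  have key : ∀ r : Setoid X, (∀ h ∈ H, ∀ x y : X, r.r x y → r.r (h x) (h y)) →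
      ∀ g ∈ G, ∀ x y : X, r.r x y → r.r (g x) (g y) := by
    intro r hH g hg x y hxy
    by_cases hxyeq : x = y
    · subst hxyeq; exact r.iseqv.refl _
    · obtain ⟨h, hh, him⟩ := (horb {x, y} {g x, g y}).mp ⟨g, hg, by simp⟩
      have hx : h x = g x ∨ h x = g y := by
        have : h x ∈ ({g x, g y} : Finset X) := him ▸ (Finset.mem_image_of_mem h (by simp))
        simpa using this
      have hy : h y = g x ∨ h y = g y := by
        have : h y ∈ ({g x, g y} : Finset X) := him ▸ (Finset.mem_image_of_mem h (by simp))
        simpa using this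
      have hne : h x ≠ h y := fun e => hxyeq (h.injective e)
      have hr := hH h hh x y hxy
      rcases hx with hx | hx <;> rcases hy with hy | hy
      · exact absurd (hx.trans hy.symm) hne
      · rw [hx, hy] at hr; exact hr
      · rw [hx, hy] at hr; exact r.iseqv.symm hr
      · exact absurd (hx.trans hy.symm) hne
  have trans_key : (∀ x y : X, ∃ g ∈ G, g x = y) ↔ (∀ x y : X, ∃ h ∈ H, h x = y) := by
    constructor
    · intro hG x y
      obtain ⟨g, hg, hgxy⟩ := hG x y
      obtain ⟨h, hh, him⟩ := (horb {x} {y}).mp ⟨g, hg, by simp [hgxy]⟩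
      exact ⟨h, hh, by simpa using him⟩
    · intro hH x y
      obtain ⟨h, hh, e⟩ := hH x y
      exact ⟨h, hle hh, e⟩
  constructor
  · intro r
    exact ⟨fun hG h hh => hG h (hle hh), key r⟩
  · unfold IsPrimitive
    constructor
    · rintro ⟨ht, hp⟩
      exact ⟨trans_key.mp ht, fun r hr => hp r (key r hr)⟩
    · rintro ⟨ht, hp⟩
      exact ⟨trans_key.mpr ht, fun r hr => hp r (fun h hh => hr h (hle hh))⟩
end

section
/- Let G and H be closed permutation groups on an infinite set X with H ≤ G. If G and H are orbit-equivalent and G acts locally rigidly on X, then H = G. -/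
/-- A closed subgroup of Sym(X): contains every permutation that agrees with elements of the
    group on every finite set. -/
def IsClosedGroup {X : Type*} (H : Subgroup (Equiv.Perm X)) : Prop :=
  ∀ g : Equiv.Perm X, (∀ s : Finset X, ∃ h ∈ H, ∀ x ∈ s, h x = g x) → g ∈ H

/-
If `g` maps a finite set `V` onto the same set as `h`, then `h⁻¹ * g` stabilises `V`. When `V`
witnesses local rigidity of `G` for `U`, this forces `h` to agree with `g` on `U`; and
orbit-equivalence provides such an `h ∈ H` for every `g ∈ G`. Hence `g` lies in the closure of `H`,
which is `H`.
-/

theorem Finset.image_inv_mul_perm_eq_self {X : Type*} [DecidableEq X] {g h : Equiv.Perm X}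
    {V : Finset X} (himg : V.image h = V.image g) : V.image ⇑(h⁻¹ * g) = V := by
  calc V.image ⇑(h⁻¹ * g) = (V.image g).image ⇑h⁻¹ := by
        rw [Finset.image_image, Equiv.Perm.coe_mul]
    _ = V := by
        rw [← himg, Finset.image_image]
        simp [Function.comp_def]

theorem exists_mem_eqOn_of_locallyRigid {X : Type*} [DecidableEq X]
    {G H : Subgroup (Equiv.Perm X)} (hle : H ≤ G)
    (horb : ∀ s t : Finset X, (∃ g ∈ G, s.image g = t) → ∃ h ∈ H, s.image h = t)
    (hlr : ∀ U : Finset X, ∃ V : Finset X, U ⊆ V ∧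
      ∀ g ∈ G, V.image g = V → ∀ x ∈ U, g x = x)
    {g : Equiv.Perm X} (hg : g ∈ G) (U : Finset X) : ∃ h ∈ H, ∀ x ∈ U, h x = g x := by
  obtain ⟨V, -, hV⟩ := hlr U
  obtain ⟨h, hH, himg⟩ := horb V (V.image g) ⟨g, hg, rfl⟩
  refine ⟨h, hH, fun x hx => ?_⟩
  have hfix : h⁻¹ (g x) = x :=
    hV _ (G.mul_mem (G.inv_mem (hle hH)) hg) (Finset.image_inv_mul_perm_eq_self himg) x hx
  calc h x = h (h⁻¹ (g x)) := by rw [hfix]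
    _ = g x := h.apply_symm_apply _

theorem stmt4_general {X : Type*} [DecidableEq X] (G H : Subgroup (Equiv.Perm X))
    (hle : H ≤ G) (hHc : IsClosedGroup H)
    (horb : ∀ s t : Finset X, (∃ g ∈ G, s.image g = t) ↔ ∃ h ∈ H, s.image h = t)
    (hlr : ∀ U : Finset X, ∃ V : Finset X, U ⊆ V ∧
      ∀ g ∈ G, V.image g = V → ∀ x ∈ U, g x = x) :
    H = G :=
  le_antisymm hle fun _ hg =>
    hHc _ (exists_mem_eqOn_of_locallyRigid hle (fun s t => (horb s t).mp) hlr hg)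

/-- closed orbit-equivalent H ≤ G with G acting locally rigidly implies H = G. -/
theorem stmt4 {X : Type*} [Infinite X] [DecidableEq X] (G H : Subgroup (Equiv.Perm X))
    (hle : H ≤ G) (hGc : IsClosedGroup G) (hHc : IsClosedGroup H)
    (horb : ∀ s t : Finset X, (∃ g ∈ G, s.image g = t) ↔ ∃ h ∈ H, s.image h = t)
    (hlr : ∀ U : Finset X, ∃ V : Finset X, U ⊆ V ∧
      ∀ g ∈ G, V.image g = V → ∀ x ∈ U, g x = x) :
    H = G :=
  stmt4_general G H hle hHc horb hlr
end

section
/- Let G be a primitive permutation group on an infinite set X, and let Γ₀ be a G-invariant graph on X (edge set a G-orbit on 2-subsets) that is not complete. Suppose the equivalence relation x ≡₀ y ⟺ |Γ₀(x) △ Γ₀(y)| < ∞ is universal (all pairs equivalent), and that there is a vertex x with both Γ₀(x) and X \ Γ₀(x) infinite. Then a contradiction follows; i.e., under universality of ≡₀, either Γ₀ or its complement is locally finite. -/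
/-!
Fix `x` and put `A = Γ₀(x)`. Universality makes every `A \ Γ₀(z)` finite, so for any finite
`Z ⊆ X \ A` all but finitely many `y ∈ A` are adjacent to every point of `Z`; as `X \ A` is
infinite, `|Γ₀(y) \ A|` is unbounded on `A`. But edge-transitivity moves each edge `{x, y}` onto a
fixed edge `{x, y₀}`, so `|Γ₀(y) \ A|` takes at most two values on `A`, both finite.
-/

namespace SimpleGraph

variable {V : Type*} {Γ : SimpleGraph V}

def IsEdgeTransitive (Γ : SimpleGraph V) : Prop :=
  ∀ a b c d : V, Γ.Adj a b → Γ.Adj c d → ∃ φ : Γ ≃g Γ, ({φ a, φ b} : Set V) = {c, d}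

theorem Iso.encard_neighborSet_diff (φ : Γ ≃g Γ) (u v : V) :
    (Γ.neighborSet (φ u) \ Γ.neighborSet (φ v)).encard =
      (Γ.neighborSet u \ Γ.neighborSet v).encard := by
  rw [← φ.image_neighborSet, ← φ.image_neighborSet, ← Set.image_sdiff φ.injective,
    φ.injective.encard_image]

theorem IsEdgeTransitive.encard_neighborSet_diff_le (hΓ : Γ.IsEdgeTransitive) {x y y₀ : V}
    (hy : Γ.Adj x y) (hy₀ : Γ.Adj x y₀) :
    (Γ.neighborSet y \ Γ.neighborSet x).encard ≤
      max (Γ.neighborSet y₀ \ Γ.neighborSet x).encard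
        (Γ.neighborSet x \ Γ.neighborSet y₀).encard := by
  obtain ⟨φ, hφ⟩ := hΓ x y x y₀ hy hy₀
  rw [← φ.encard_neighborSet_diff]
  rcases Set.pair_eq_pair_iff.mp hφ with ⟨hx, hy⟩ | ⟨hx, hy⟩
  · rw [hx, hy]
    exact le_max_left _ _
  · rw [hx, hy]
    exact le_max_right _ _

theorem exists_le_encard_neighborSet_diff {x : V} (hA : (Γ.neighborSet x).Infinite)
    (hAc : (Γ.neighborSet x)ᶜ.Infinite) (hfin : ∀ z, (Γ.neighborSet x \ Γ.neighborSet z).Finite)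
    (n : ℕ) : ∃ y ∈ Γ.neighborSet x, (n : ℕ∞) ≤ (Γ.neighborSet y \ Γ.neighborSet x).encard := by
  obtain ⟨Z, hZA, hZn⟩ := Set.exists_subset_encard_eq (hAc.encard_eq ▸ le_top : (n : ℕ∞) ≤ _)
  have hZ : Z.Finite := Set.finite_of_encard_eq_coe hZn
  have hbad : (⋃ z ∈ Z, Γ.neighborSet x \ Γ.neighborSet z).Finite :=
    hZ.biUnion fun z _ ↦ hfin z
  obtain ⟨y, hyA, hy⟩ := (hA.sdiff hbad).nonempty
  refine ⟨y, hyA, hZn ▸ Set.encard_le_encard fun z hz ↦ ⟨?_, hZA hz⟩⟩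
  by_contra hyz
  exact hy (Set.mem_biUnion hz ⟨hyA, fun h ↦ hyz (Γ.adj_symm h)⟩)

end SimpleGraph

open SimpleGraph in
theorem stmt6_general {X : Type*} (G : Subgroup (Equiv.Perm X))
    (Γ₀ : SimpleGraph X)
    (hinv : ∀ g ∈ G, ∀ x y : X, Γ₀.Adj x y ↔ Γ₀.Adj (g x) (g y))
    (horbit : ∀ a b c d : X, Γ₀.Adj a b → Γ₀.Adj c d →
      ∃ g ∈ G, ({g a, g b} : Set X) = {c, d})
    (huniv : ∀ x y : X, (symmDiff (Γ₀.neighborSet x) (Γ₀.neighborSet y)).Finite)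
    (hx : ∃ x : X, (Γ₀.neighborSet x).Infinite ∧ ((Γ₀.neighborSet x)ᶜ : Set X).Infinite) :
    False := by
  have hΓ₀ : Γ₀.IsEdgeTransitive := fun a b c d hab hcd ↦ by
    obtain ⟨g, hg, hgab⟩ := horbit a b c d hab hcd
    exact ⟨⟨g, (hinv g hg _ _).symm⟩, hgab⟩
  have hdiff (u v : X) : (Γ₀.neighborSet u \ Γ₀.neighborSet v).Finite :=
    (huniv u v).subset Set.subset_union_left
  obtain ⟨x, hA, hAc⟩ := hx
  obtain ⟨y₀, hy₀⟩ := hA.nonempty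
  obtain ⟨n, hn⟩ := ENat.ne_top_iff_exists.mp
    (max_ne_top (hdiff y₀ x).encard_lt_top.ne (hdiff x y₀).encard_lt_top.ne)
  obtain ⟨y, hy, hny⟩ := exists_le_encard_neighborSet_diff hA hAc (hdiff x) (n + 1)
  have : ((n + 1 : ℕ) : ℕ∞) ≤ n := hn ▸ hny.trans (hΓ₀.encard_neighborSet_diff_le hy hy₀)
  norm_cast at this
  omega

/-- G primitive on infinite X, Γ₀ a non-complete G-invariant graph whose edge set
    is a G-orbit on 2-subsets; if ≡₀ (finite symmetric difference of neighbour sets) is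
    universal, no vertex can have both its neighbour set and its complement infinite. -/
theorem stmt6 {X : Type*} [Infinite X] (G : Subgroup (Equiv.Perm X))
    (htrans : ∀ x y : X, ∃ g ∈ G, g x = y)
    (hprim : ∀ r : Setoid X, (∀ g ∈ G, ∀ x y : X, r.r x y → r.r (g x) (g y)) →
      (∀ x y : X, r.r x y → x = y) ∨ (∀ x y : X, r.r x y))
    (Γ₀ : SimpleGraph X)
    (hinv : ∀ g ∈ G, ∀ x y : X, Γ₀.Adj x y ↔ Γ₀.Adj (g x) (g y))
    (horbit : ∀ a b c d : X, Γ₀.Adj a b → Γ₀.Adj c d →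
      ∃ g ∈ G, ({g a, g b} : Set X) = {c, d})
    (hnc : ∃ x y : X, x ≠ y ∧ ¬ Γ₀.Adj x y)
    (huniv : ∀ x y : X, (symmDiff (Γ₀.neighborSet x) (Γ₀.neighborSet y)).Finite)
    (hx : ∃ x : X, (Γ₀.neighborSet x).Infinite ∧ ((Γ₀.neighborSet x)ᶜ : Set X).Infinite) :
    False :=
  stmt6_general G Γ₀ hinv horbit huniv hx
end

section
/- Let Γ₀ be a connected locally finite infinite graph with at least one edge, and let Γ be the graph on the same vertex set whose edges are the pairs of distinct vertices at even graph-distance in Γ₀. Then there exist adjacent vertices v₀ ∼ v₁ in Γ₀ such that Γ(v₀) △ Γ(v₁) is infinite. -/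
/-- Γ₀ connected locally finite infinite graph with an edge; Γ joins distinct
    vertices at even Γ₀-distance. Then some Γ₀-edge v₀ ∼ v₁ has Γ(v₀) △ Γ(v₁) infinite. -/
theorem stmt7 {X : Type*} [Infinite X] (Γ₀ Γ : SimpleGraph X)
    (hconn : Γ₀.Connected) (hlf : ∀ v : X, (Γ₀.neighborSet v).Finite)
    (hedge : ∃ a b : X, Γ₀.Adj a b)
    (hΓ : ∀ x y : X, Γ.Adj x y ↔ x ≠ y ∧ Even (Γ₀.dist x y)) :
    ∃ v₀ v₁ : X, Γ₀.Adj v₀ v₁ ∧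
      (symmDiff (Γ.neighborSet v₀) (Γ.neighborSet v₁)).Infinite := by
  obtain ⟨v₀, -, -⟩ := hedge
  -- each w ≠ v₀ has a first step of a geodesic
  have key : ∀ w : X, w ≠ v₀ → ∃ z, Γ₀.Adj v₀ z ∧ Γ₀.dist z w + 1 = Γ₀.dist v₀ w := by
    intro w hw
    obtain ⟨p, hp⟩ := (hconn v₀ w).exists_walk_length_eq_dist
    cases p with
    | nil => exact absurd rfl hw
    | cons h q =>
        rename_i z
        refine ⟨z, h, ?_⟩
        have h1 : Γ₀.dist z w ≤ q.length := SimpleGraph.dist_le q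
        have h2 : Γ₀.dist v₀ w ≤ Γ₀.dist v₀ z + Γ₀.dist z w := hconn.dist_triangle
        have h3 : Γ₀.dist v₀ z ≤ 1 := by
          have := SimpleGraph.dist_le h.toWalk
          simpa using this
        simp only [SimpleGraph.Walk.length_cons] at hp
        omega
  choose! f hf hd using key
  have hsub : ({v₀}ᶜ : Set X) ⊆ ⋃ z ∈ Γ₀.neighborSet v₀, {w | w ≠ v₀ ∧ f w = z} := by
    intro w hw
    have hw' : w ≠ v₀ := hw
    exact Set.mem_biUnion (hf w hw') ⟨hw', rfl⟩
  have hex : ∃ z ∈ Γ₀.neighborSet v₀, {w | w ≠ v₀ ∧ f w = z}.Infinite := by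
    by_contra h
    push_neg at h
    have : ({v₀}ᶜ : Set X).Finite :=
      Set.Finite.subset (Set.Finite.biUnion (hlf v₀) h) hsub
    exact (Set.Finite.infinite_compl (Set.finite_singleton v₀)) this
  obtain ⟨z, hz, hinf⟩ := hex
  refine ⟨v₀, z, hz, ?_⟩
  refine ((hinf.diff (Set.finite_singleton z)).mono ?_)
  rintro w ⟨⟨hwv, hfw⟩, hwz⟩
  have hwz' : w ≠ z := by simpa using hwz
  have hdist : Γ₀.dist z w + 1 = Γ₀.dist v₀ w := by rw [← hfw]; exact hd w hwv
  rw [Set.mem_symmDiff]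
  rcases Nat.even_or_odd (Γ₀.dist v₀ w) with he | ho
  · left
    constructor
    · exact (hΓ v₀ w).mpr ⟨hwv.symm, he⟩
    · intro hc
      have h2 := ((hΓ z w).mp hc).2
      rw [Nat.even_iff] at he h2
      omega
  · right
    constructor
    · refine (hΓ z w).mpr ⟨hwz'.symm, ?_⟩
      rw [Nat.odd_iff] at ho
      rw [Nat.even_iff]
      omega
    · intro hc
      have h2 := ((hΓ v₀ w).mp hc).2
      rw [Nat.odd_iff] at ho
      rw [Nat.even_iff] at h2
      omega
end

section
/- In any tournament T = (X, →), the maximal good subsets of X form a partition of X. -/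
def IsTournament {X : Type*} (r : X → X → Prop) : Prop :=
  (∀ x, ¬ r x x) ∧ ∀ x y : X, x ≠ y → (r x y ↔ ¬ r y x)

/-- A nonempty set is nice if all its vertices relate the same way to each outside vertex. -/
def IsNice {X : Type*} (r : X → X → Prop) (A : Set X) : Prop :=
  A.Nonempty ∧ ∀ a₁ ∈ A, ∀ a₂ ∈ A, ∀ v ∉ A, (r a₁ v ↔ r a₂ v)

/-- A good set is nice and totally ordered by the arc relation (transitive within itself). -/
def IsGood {X : Type*} (r : X → X → Prop) (A : Set X) : Prop :=
  IsNice r A ∧ ∀ x ∈ A, ∀ y ∈ A, ∀ z ∈ A, r x y → r y z → r x z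

def IsMaxGood {X : Type*} (r : X → X → Prop) (A : Set X) : Prop :=
  IsGood r A ∧ ∀ B : Set X, IsGood r B → A ⊆ B → A = B

section Aux

variable {X : Type*} {r : X → X → Prop}

lemma tour_ne (ht : IsTournament r) {x y : X} (h : r x y) : x ≠ y :=
  fun e => ht.1 y (e ▸ h)

lemma tour_not (ht : IsTournament r) {x y : X} (hne : x ≠ y) (h : r x y) : ¬ r y x :=
  (ht.2 x y hne).mp h

lemma tour_total (ht : IsTournament r) {x y : X} (hne : x ≠ y) (h : ¬ r y x) : r x y :=
  (ht.2 x y hne).mpr h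

lemma union_good (ht : IsTournament r) {A B : Set X}
    (hA : IsGood r A) (hB : IsGood r B) (hAB : (A ∩ B).Nonempty) :
    IsGood r (A ∪ B) := by
  obtain ⟨c, hcA, hcB⟩ := hAB
  constructor
  · refine ⟨⟨c, Or.inl hcA⟩, ?_⟩
    rintro a₁ h₁ a₂ h₂ v hv
    have hvA : v ∉ A := fun h => hv (Or.inl h)
    have hvB : v ∉ B := fun h => hv (Or.inr h)
    have key : ∀ a, a ∈ A ∪ B → (r a v ↔ r c v) := by
      rintro a (ha | ha)
      · exact hA.1.2 a ha c hcA v hvA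
      · exact hB.1.2 a ha c hcB v hvB
    exact (key a₁ h₁).trans (key a₂ h₂).symm
  · rintro x hx y hy z hz hxy hyz
    have hxyne := tour_ne ht hxy
    have hyzne := tour_ne ht hyz
    have hyOr : y ∈ A ∨ y ∈ B := hy
    -- case: x and z both in the same good set C
    have H1 : ∀ C : Set X, IsGood r C → x ∈ C → z ∈ C → r x z := by
      intro C hC hxC hzC
      by_cases hyC : y ∈ C
      · exact hC.2 x hxC y hyC z hzC hxy hyz
      · have h1 : r z y := (hC.1.2 x hxC z hzC y hyC).mp hxy
        exact absurd h1 (tour_not ht hyzne hyz)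
    -- case: x ∈ C, x ∉ D, z ∈ D, with y in C or D
    have H2 : ∀ C D : Set X, IsGood r C → IsGood r D → (y ∈ C ∨ y ∈ D) →
        x ∈ C → x ∉ D → z ∈ D → r x z := by
      intro C D hC hD hyCD hxC hxD hzD
      have hne : x ≠ z := fun e => hxD (e ▸ hzD)
      by_cases hzC : z ∈ C
      · exact H1 C hC hxC hzC
      rcases hyCD with hyC | hyD
      · exact (hC.1.2 y hyC x hxC z hzC).mp hyz
      · have h1 : ¬ r y x := tour_not ht hxyne hxy
        have h2 : ¬ r z x := fun h => h1 ((hD.1.2 z hzD y hyD x hxD).mp h)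
        exact tour_total ht hne h2
    by_cases hxA : x ∈ A
    · by_cases hzA : z ∈ A
      · exact H1 A hA hxA hzA
      · have hzB : z ∈ B := hz.resolve_left hzA
        by_cases hxB : x ∈ B
        · exact H1 B hB hxB hzB
        · exact H2 A B hA hB hyOr hxA hxB hzB
    · have hxB : x ∈ B := hx.resolve_left hxA
      by_cases hzB : z ∈ B
      · exact H1 B hB hxB hzB
      · have hzA : z ∈ A := hz.resolve_right hzB
        exact H2 B A hB hA hyOr.symm hxB hxA hzA

lemma exists_maxgood (ht : IsTournament r) (x : X) :
    ∃ A : Set X, IsMaxGood r A ∧ x ∈ A := by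
  set S : Set (Set X) := {A | IsGood r A ∧ x ∈ A} with hS
  have hsingle : ({x} : Set X) ∈ S := by
    refine ⟨⟨⟨⟨x, rfl⟩, ?_⟩, ?_⟩, rfl⟩
    · rintro a₁ rfl a₂ rfl v hv; rfl
    · rintro a rfl b rfl c rfl hab _
      exact absurd hab (ht.1 _)
  have hchain : ∀ c ⊆ S, IsChain (· ⊆ ·) c → c.Nonempty →
      ∃ ub ∈ S, ∀ s ∈ c, s ⊆ ub := by
    intro c hcS hc ⟨A₀, hA₀⟩
    have htotal : ∀ A ∈ c, ∀ B ∈ c, A ⊆ B ∨ B ⊆ A := by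
      intro A hA B hB
      rcases eq_or_ne A B with rfl | hne
      · exact Or.inl subset_rfl
      · exact hc hA hB hne
    refine ⟨⋃₀ c, ⟨⟨⟨⟨x, A₀, hA₀, (hcS hA₀).2⟩, ?_⟩, ?_⟩, ⟨A₀, hA₀, (hcS hA₀).2⟩⟩,
      fun s hs => Set.subset_sUnion_of_mem hs⟩
    · rintro a₁ ⟨A₁, hA₁, ha₁⟩ a₂ ⟨A₂, hA₂, ha₂⟩ v hv
      rcases htotal A₁ hA₁ A₂ hA₂ with h | h
      · exact (hcS hA₂).1.1.2 a₁ (h ha₁) a₂ ha₂ v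
          (fun hvm => hv ⟨A₂, hA₂, hvm⟩)
      · exact (hcS hA₁).1.1.2 a₁ ha₁ a₂ (h ha₂) v
          (fun hvm => hv ⟨A₁, hA₁, hvm⟩)
    · rintro a ⟨A₁, hA₁, ha⟩ b ⟨A₂, hA₂, hb⟩ d ⟨A₃, hA₃, hd⟩ hab hbd
      -- find a common superset of A₁, A₂, A₃ within the chain
      have : ∃ C ∈ c, a ∈ C ∧ b ∈ C ∧ d ∈ C := by
        rcases htotal A₁ hA₁ A₂ hA₂ with h12 | h12
        · rcases htotal A₂ hA₂ A₃ hA₃ with h23 | h23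
          · exact ⟨A₃, hA₃, h23 (h12 ha), h23 hb, hd⟩
          · exact ⟨A₂, hA₂, h12 ha, hb, h23 hd⟩
        · rcases htotal A₁ hA₁ A₃ hA₃ with h13 | h13
          · exact ⟨A₃, hA₃, h13 ha, h13 (h12 hb), hd⟩
          · exact ⟨A₁, hA₁, ha, h12 hb, h13 hd⟩
      obtain ⟨C, hCc, haC, hbC, hdC⟩ := this
      exact (hcS hCc).1.2 a haC b hbC d hdC hab hbd
  obtain ⟨m, hxm, hmax⟩ := zorn_subset_nonempty S hchain {x} hsingle
  refine ⟨m, ⟨hmax.1.1, ?_⟩, hxm rfl⟩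
  intro B hB hmB
  have hBS : B ∈ S := ⟨hB, hmB (hmax.1.2)⟩
  exact le_antisymm hmB (hmax.2 hBS hmB)

end Aux

/-- in any tournament the maximal good subsets partition the vertex set. -/
theorem stmt13 {X : Type*} (r : X → X → Prop) (ht : IsTournament r) :
    ∀ x : X, ∃! A : Set X, IsMaxGood r A ∧ x ∈ A := by
  intro x
  obtain ⟨A, hA, hxA⟩ := exists_maxgood ht x
  refine ⟨A, ⟨hA, hxA⟩, ?_⟩
  rintro B ⟨hB, hxB⟩
  have hU : IsGood r (A ∪ B) := union_good ht hA.1 hB.1 ⟨x, hxA, hxB⟩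
  have h1 : A = A ∪ B := hA.2 _ hU Set.subset_union_left
  have h2 : B = A ∪ B := hB.2 _ hU Set.subset_union_right
  rw [h2, ← h1]
end

section
/- Let T = (X, →) be an infinite tournament such that for any distinct x, y ∈ X, both Γ⁺(x) \ Γ⁺(y) and Γ⁺(y) \ Γ⁺(x) are infinite. Then T is cofinally rigid: every finite subset U of X is contained in a finite subset V such that the induced subtournament on V has trivial automorphism group. -/
/-!
For every ordered pair `u ≠ u'` of `U` choose a block `M q` of vertices `b` with `u → b → u'`.
The hypothesis leaves infinitely many candidates, so by Ramsey-type extraction each block can be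
taken transitive, larger than `U` and all earlier blocks together, and not split by any other
vertex of `V = U ∪ ⋃ q, M q`: earlier vertices are made uniform on the block when it is chosen,
and each earlier block is then halved according to its side of the new one.

Let `g` be an automorphism of `V` fixing the blocks above `M q` pointwise. The interior vertices
of `M q` are too many to be mapped into `U` and the lower blocks, so one of them is mapped into
`M q`; it is fixed, because `g` preserves scores and score minus rank is constant on a module.
Consecutive vertices of a transitive module are twins, and twins of an interior vertex stay in
its block, so the fixed points spread through `M q`. Once every block is fixed, `g` permutes `U`,
and `g u = u' ≠ u` is impossible: a fixed `b` with `u → b → u'` would give `u' = g u → g b = b`,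
against `b → u'`.
-/

section

open Finset

variable {α : Type*} {r : α → α → Prop}

namespace IsTournament

theorem irrefl (ht : IsTournament r) (x : α) : ¬ r x x := ht.1 x

theorem asymm (ht : IsTournament r) {x y : α} (h : r x y) : ¬ r y x := by
  rcases eq_or_ne x y with rfl | hne
  · exact absurd h (ht.irrefl x)
  · exact (ht.2 x y hne).1 h

theorem rel_of_not_rel (ht : IsTournament r) {x y : α} (hne : x ≠ y) (h : ¬ r y x) : r x y :=
  (ht.2 x y hne).2 h

theorem total (ht : IsTournament r) {x y : α} (hne : x ≠ y) : r x y ∨ r y x :=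
  or_iff_not_imp_right.2 (ht.rel_of_not_rel hne)

theorem comap {β : Type*} (ht : IsTournament r) {f : β → α} (hf : Function.Injective f) :
    IsTournament (fun a b => r (f a) (f b)) :=
  ⟨fun x => ht.irrefl (f x), fun x y hne => ht.2 (f x) (f y) (hf.ne hne)⟩

end IsTournament

def IsTransOn (r : α → α → Prop) (M : Finset α) : Prop :=
  ∀ a ∈ M, ∀ b ∈ M, ∀ c ∈ M, r a b → r b c → r a c

def IsUniform (r : α → α → Prop) (v : α) (M : Finset α) : Prop :=
  (∀ b ∈ M, r v b) ∨ (∀ b ∈ M, r b v)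

def IsModule (r : α → α → Prop) (M : Finset α) : Prop := ∀ v ∉ M, IsUniform r v M

theorem IsTransOn.mono {M N : Finset α} (h : IsTransOn r M) (hNM : N ⊆ M) : IsTransOn r N :=
  fun a ha b hb c hc => h a (hNM ha) b (hNM hb) c (hNM hc)

theorem IsUniform.mono {v : α} {M N : Finset α} (h : IsUniform r v M) (hNM : N ⊆ M) :
    IsUniform r v N :=
  h.imp (fun h b hb => h b (hNM hb)) (fun h b hb => h b (hNM hb))

theorem IsUniform.rel_iff (ht : IsTournament r) {v a b : α} {M : Finset α}
    (h : IsUniform r v M) (ha : a ∈ M) (hb : b ∈ M) : r a v ↔ r b v := by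
  rcases h with h | h
  · exact iff_of_false (ht.asymm (h a ha)) (ht.asymm (h b hb))
  · exact iff_of_true (h a ha) (h b hb)

theorem IsUniform.rel_iff_exists (ht : IsTournament r) {c v : α} {N : Finset α}
    (h : IsUniform r c N) (hv : v ∈ N) : r v c ↔ ∃ w ∈ N, r w c :=
  ⟨fun hvc => ⟨v, hv, hvc⟩, fun ⟨_, hw, hwc⟩ => (h.rel_iff ht hw hv).1 hwc⟩

theorem isUniform_of_forall_iff (ht : IsTournament r) {v : α} {M : Finset α} (hv : v ∉ M)
    (h : ∀ b ∈ M, ∀ b' ∈ M, r v b ↔ r v b') : IsUniform r v M := by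
  by_cases hex : ∃ b ∈ M, r v b
  · obtain ⟨b, hb, hvb⟩ := hex
    exact Or.inl fun b' hb' => (h b hb b' hb').1 hvb
  · push Not at hex
    exact Or.inr fun b hb => ht.rel_of_not_rel (fun h => hv (h ▸ hb)) (hex b hb)

theorem IsTransOn.insert [DecidableEq α] (ht : IsTournament r) {v : α} {M : Finset α}
    (hM : IsTransOn r M) (hv : IsUniform r v M) : IsTransOn r (insert v M) := by
  intro a ha b hb c hc hab hbc
  rw [mem_insert] at ha hb hc
  rcases hv with hv | hv <;> grind [IsTransOn, ht.irrefl, ht.asymm]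

def IsTwin (r : α → α → Prop) (a b : α) : Prop := ∀ w, w ≠ a → w ≠ b → (r a w ↔ r b w)

theorem IsTwin.symm {a b : α} (h : IsTwin r a b) : IsTwin r b a :=
  fun w hwb hwa => (h w hwa hwb).symm

theorem IsTwin.relIso {a b : α} (h : IsTwin r a b) (g : r ≃r r) : IsTwin r (g a) (g b) := by
  intro w hwa hwb
  obtain ⟨w, rfl⟩ := g.surjective w
  rw [g.map_rel_iff, g.map_rel_iff]
  exact h w (ne_of_apply_ne g hwa) (ne_of_apply_ne g hwb)

theorem setOf_rel_rel_infinite (ht : IsTournament r) {x y : α}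
    (h : ({v | r x v} \ {v | r y v} : Set α).Infinite) : {v | r x v ∧ r v y}.Infinite :=
  (h.sdiff (Set.finite_singleton y)).mono fun _ hv => ⟨hv.1.1, ht.rel_of_not_rel hv.2 hv.1.2⟩

theorem exists_infinite_subset_forall_rel_iff {S : Set α} (hS : S.Infinite) (P : Finset α) :
    ∃ T ⊆ S, T.Infinite ∧ ∀ p ∈ P, ∀ v ∈ T, ∀ w ∈ T, r p v ↔ r p w := by
  have : Infinite S := hS.to_subtype
  obtain ⟨y, hy⟩ := Finite.exists_infinite_fiber fun (v : S) (p : P) => r p v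
  refine ⟨Subtype.val '' _, by simp, (Set.infinite_coe_iff.1 hy).image Subtype.val_injective.injOn,
    ?_⟩
  rintro p hp _ ⟨v, hv, rfl⟩ _ ⟨w, hw, rfl⟩
  exact Iff.of_eq (congrFun (hv.trans hw.symm) ⟨p, hp⟩)

theorem exists_isTransOn_subset (ht : IsTournament r) {S : Set α} (hS : S.Infinite) (k : ℕ) :
    ∃ B : Finset α, ↑B ⊆ S ∧ #B = k ∧ IsTransOn r B := by
  classical
  induction k generalizing S with
  | zero => exact ⟨∅, by simp, rfl, by simp [IsTransOn]⟩
  | succ k ih =>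
    obtain ⟨v, hv⟩ := hS.nonempty
    obtain ⟨T, hTS, hT, hconst⟩ :=
      exists_infinite_subset_forall_rel_iff (r := r) (hS.sdiff (Set.finite_singleton v)) {v}
    obtain ⟨B, hBT, hB, hBtrans⟩ := ih hT
    have hvB : v ∉ B := fun h => (hTS (hBT h)).2 rfl
    refine ⟨insert v B, ?_, by rw [card_insert_of_notMem hvB, hB], hBtrans.insert ht ?_⟩
    · rw [coe_insert]
      exact Set.insert_subset hv ((hBT.trans hTS).trans Set.sdiff_subset)
    · exact isUniform_of_forall_iff ht hvB fun b hb b' hb' =>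
        hconst v (mem_singleton_self v) b (hBT hb) b' (hBT hb')

theorem exists_isTransOn_subset_forall_isUniform (ht : IsTournament r) {S : Set α}
    (hS : S.Infinite) (P : Finset α) (k : ℕ) :
    ∃ N : Finset α, ↑N ⊆ S ∧ #N = k ∧ Disjoint P N ∧ IsTransOn r N ∧
      ∀ v ∈ P, IsUniform r v N := by
  obtain ⟨T, hTS, hT, hconst⟩ :=
    exists_infinite_subset_forall_rel_iff (r := r) (hS.sdiff P.finite_toSet) P
  obtain ⟨N, hNT, hN, hNtrans⟩ := exists_isTransOn_subset ht hT k
  have hNS : ↑N ⊆ S \ ↑P := hNT.trans hTS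
  refine ⟨N, hNS.trans Set.sdiff_subset, hN, disjoint_left.2 fun v hvP hvN => (hNS hvN).2 hvP,
    hNtrans, fun v hv => isUniform_of_forall_iff ht (fun hvN => (hNS hvN).2 hv) ?_⟩
  exact fun b hb b' hb' => hconst v hv b (hNT hb) b' (hNT hb')

theorem exists_subset_forall_iff_card_le (A : Finset α) (p : α → Prop) :
    ∃ A' ⊆ A, #A ≤ 2 * #A' ∧ ∀ a ∈ A', ∀ b ∈ A', p a ↔ p b := by
  classical
  have hsplit := card_filter_add_card_filter_not (s := A) p
  by_cases h : #A ≤ 2 * #(A.filter p)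
  · exact ⟨A.filter p, filter_subset _ _, h,
      fun a ha b hb => iff_of_true (mem_filter.1 ha).2 (mem_filter.1 hb).2⟩
  · exact ⟨A.filter (¬ p ·), filter_subset _ _, by omega,
      fun a ha b hb => iff_of_false (mem_filter.1 ha).2 (mem_filter.1 hb).2⟩

theorem exists_subsets_forall_isUniform (ht : IsTournament r) (M : ℕ → Finset α) {m : ℕ}
    {N : Finset α} (hdisj : ∀ q < m, Disjoint (M q) N)
    (hunif : ∀ q < m, ∀ c ∈ M q, IsUniform r c N) :
    ∃ M' : ℕ → Finset α, (∀ q, M' q ⊆ M q) ∧ (∀ q, #(M q) ≤ 2 * #(M' q)) ∧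
      ∀ q < m, ∀ v ∈ N, IsUniform r v (M' q) := by
  choose M' hM'M hM'card hM'iff using
    fun q => exists_subset_forall_iff_card_le (M q) fun c => ∃ w ∈ N, r w c
  refine ⟨M', hM'M, hM'card, fun q hq v hv => ?_⟩
  have hside : ∀ c ∈ M' q, r v c ↔ ∃ w ∈ N, r w c := fun c hc =>
    (hunif q hq c (hM'M q hc)).rel_iff_exists ht hv
  refine isUniform_of_forall_iff ht (fun hvq => disjoint_left.1 (hdisj q hq) (hM'M q hvq) hv)
    fun c hc c' hc' => ?_
  rw [hside c hc, hside c' hc']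
  exact hM'iff q c hc c' hc'

section BlockFrame

variable [DecidableEq α]

theorem union_biUnion_range_update (U : Finset α) (M : ℕ → Finset α) (m : ℕ) (N : Finset α) :
    U ∪ (range (m + 1)).biUnion (Function.update M m N) = U ∪ (range m).biUnion M ∪ N := by
  rw [range_add_one, biUnion_insert, Function.update_self, union_comm N, ← union_assoc,
    biUnion_congr rfl fun i hi => Function.update_of_ne (mem_range.1 hi).ne N M]

structure IsBlockFrame (r : α → α → Prop) (U : Finset α) (M : ℕ → Finset α) (m : ℕ) : Prop where
  disjoint_base : ∀ q < m, Disjoint U (M q)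
  pairwiseDisjoint : (range m : Set ℕ).PairwiseDisjoint M
  isTransOn : ∀ q < m, IsTransOn r (M q)
  isUniform : ∀ q < m, ∀ v ∈ U ∪ (range m).biUnion M, v ∉ M q → IsUniform r v (M q)

namespace IsBlockFrame

variable {U : Finset α} {M : ℕ → Finset α} {m : ℕ}

theorem disjoint (hF : IsBlockFrame r U M m) {i j : ℕ} (hi : i < m) (hj : j < m) (hij : i ≠ j) :
    Disjoint (M i) (M j) :=
  hF.pairwiseDisjoint (mem_coe.2 (mem_range.2 hi)) (mem_coe.2 (mem_range.2 hj)) hij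

theorem mono (hF : IsBlockFrame r U M m) {M' : ℕ → Finset α} (h : ∀ q < m, M' q ⊆ M q) :
    IsBlockFrame r U M' m where
  disjoint_base q hq := (hF.disjoint_base q hq).mono_right (h q hq)
  pairwiseDisjoint := hF.pairwiseDisjoint.mono_on fun q hq => h q (by simpa using hq)
  isTransOn q hq := (hF.isTransOn q hq).mono (h q hq)
  isUniform q hq v hv hvq := by
    refine (hF.isUniform q hq v ?_ ?_).mono (h q hq)
    · exact union_subset_union_right (biUnion_mono fun i hi => h i (mem_range.1 hi)) hv
    · rcases mem_union.1 hv with hvU | hvM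
      · exact disjoint_left.1 (hF.disjoint_base q hq) hvU
      · obtain ⟨i, hi, hvi⟩ := mem_biUnion.1 hvM
        have hiq : i ≠ q := by rintro rfl; exact hvq hvi
        exact disjoint_left.1 (hF.disjoint (mem_range.1 hi) hq hiq) (h i (mem_range.1 hi) hvi)

theorem update (hF : IsBlockFrame r U M m) {N : Finset α}
    (hdisj : Disjoint (U ∪ (range m).biUnion M) N) (htrans : IsTransOn r N)
    (hunif : ∀ v ∈ U ∪ (range m).biUnion M, IsUniform r v N)
    (hunif' : ∀ q < m, ∀ v ∈ N, IsUniform r v (M q)) :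
    IsBlockFrame r U (Function.update M m N) (m + 1) where
  disjoint_base q hq := by
    rcases Nat.lt_succ_iff_lt_or_eq.1 hq with hq | rfl
    · rw [Function.update_of_ne hq.ne]
      exact hF.disjoint_base q hq
    · rw [Function.update_self]
      exact hdisj.mono_left subset_union_left
  pairwiseDisjoint := by
    rw [range_add_one, coe_insert]
    refine (hF.pairwiseDisjoint.mono_on fun i hi => ?_).insert fun j hj hmj => ?_
    · rw [Function.update_of_ne (mem_range.1 hi).ne]
    · rw [Function.update_self, Function.update_of_ne hmj.symm]
      exact hdisj.symm.mono_right (subset_union_right.trans' (subset_biUnion_of_mem M hj))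
  isTransOn q hq := by
    rcases Nat.lt_succ_iff_lt_or_eq.1 hq with hq | rfl
    · rw [Function.update_of_ne hq.ne]
      exact hF.isTransOn q hq
    · rwa [Function.update_self]
  isUniform q hq v hv hvq := by
    rw [union_biUnion_range_update, mem_union] at hv
    rcases Nat.lt_succ_iff_lt_or_eq.1 hq with hq | rfl
    · rw [Function.update_of_ne hq.ne] at hvq ⊢
      rcases hv with hv | hvN
      · exact hF.isUniform q hq v hv hvq
      · exact hunif' q hq v hvN
    · rw [Function.update_self] at hvq ⊢
      exact hunif v (hv.resolve_right hvq)

theorem isModule (hF : IsBlockFrame r U M m) (hcover : ∀ v, v ∈ U ∪ (range m).biUnion M)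
    {q : ℕ} (hq : q < m) : IsModule r (M q) :=
  fun v hv => hF.isUniform q hq v (hcover v) hv

theorem exists_extend (ht : IsTournament r) (hF : IsBlockFrame r U M m) {k : ℕ}
    (hcard : ∀ q < m, 2 * k * (#U + ∑ i ∈ range q, #(M i) + 3) ≤ #(M q)) {S : Set α}
    (hS : S.Infinite) :
    ∃ M' : ℕ → Finset α, IsBlockFrame r U M' (m + 1) ∧
      (∀ q < m + 1, k * (#U + ∑ i ∈ range q, #(M' i) + 3) ≤ #(M' q)) ∧
      (∀ q < m, M' q ⊆ M q) ∧ ↑(M' m) ⊆ S := by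
  obtain ⟨N, hNS, hN, hNdisj, hNtrans, hNunif⟩ :=
    exists_isTransOn_subset_forall_isUniform ht hS (U ∪ (range m).biUnion M)
      (k * (#U + ∑ i ∈ range m, #(M i) + 3))
  have hMV : ∀ q < m, M q ⊆ U ∪ (range m).biUnion M := fun q hq =>
    (subset_biUnion_of_mem M (mem_range.2 hq)).trans subset_union_right
  obtain ⟨M', hM'M, hM'card, hM'unif⟩ := exists_subsets_forall_isUniform ht M
    (fun q hq => hNdisj.mono_left (hMV q hq)) fun q hq c hc => hNunif c (hMV q hq hc)
  have hV' : U ∪ (range m).biUnion M' ⊆ U ∪ (range m).biUnion M :=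
    union_subset_union_right (biUnion_mono fun i _ => hM'M i)
  have hsum : ∀ q ≤ m,
      ∑ i ∈ range q, #(Function.update M' m N i) ≤ ∑ i ∈ range q, #(M i) := fun q hq =>
    sum_le_sum fun i hi => by
      rw [Function.update_of_ne (by simp at hi; omega)]
      exact card_le_card (hM'M i)
  refine ⟨Function.update M' m N, (hF.mono fun q _ => hM'M q).update (hNdisj.mono_left hV')
    hNtrans (fun v hv => hNunif v (hV' hv)) hM'unif, fun q hq => ?_,
    fun q hq => by rw [Function.update_of_ne hq.ne]; exact hM'M q, by rwa [Function.update_self]⟩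
  rcases Nat.lt_succ_iff_lt_or_eq.1 hq with hq | rfl
  · rw [Function.update_of_ne hq.ne]
    calc k * (#U + ∑ i ∈ range q, #(Function.update M' m N i) + 3)
        ≤ k * (#U + ∑ i ∈ range q, #(M i) + 3) :=
          Nat.mul_le_mul_left k (by have := hsum q hq.le; omega)
      _ ≤ #(M' q) := by
        have := hcard q hq
        have := hM'card q
        rw [mul_assoc] at *
        omega
  · rw [Function.update_self, hN]
    exact Nat.mul_le_mul_left k (by have := hsum q le_rfl; omega)

end IsBlockFrame

theorem exists_isBlockFrame (ht : IsTournament r) (U : Finset α)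
    (Q : Finset (α × α)) (hQ : ∀ p ∈ Q, {v | r p.1 v ∧ r v p.2}.Infinite) (k : ℕ) :
    ∃ M m, IsBlockFrame r U M m ∧ (∀ q < m, k * (#U + ∑ i ∈ range q, #(M i) + 3) ≤ #(M q)) ∧
      ∀ p ∈ Q, ∃ q < m, ∀ b ∈ M q, r p.1 b ∧ r b p.2 := by
  induction Q using Finset.induction_on generalizing k with
  | empty => exact ⟨fun _ => ∅, 0, ⟨by simp, by simp, by simp, by simp⟩, by simp, by simp⟩
  | insert p Q _ ih =>
    obtain ⟨M, m, hF, hcard, hsep⟩ := ih (fun p' hp' => hQ p' (mem_insert_of_mem hp')) (2 * k)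
    obtain ⟨M', hF', hcard', hM'M, hM'p⟩ := hF.exists_extend ht hcard (hQ p (mem_insert_self p Q))
    refine ⟨M', m + 1, hF', hcard', fun p' hp' => ?_⟩
    rcases mem_insert.1 hp' with rfl | hp'
    · exact ⟨m, lt_add_one m, fun b hb => hM'p hb⟩
    · obtain ⟨q, hq, h⟩ := hsep p' hp'
      exact ⟨q, hq.trans (lt_add_one m), fun b hb => h b (hM'M q hq hb)⟩

end BlockFrame

section Rank

variable [DecidableRel r] {M : Finset α} {a b b' : α}

def rank (r : α → α → Prop) [DecidableRel r] (M : Finset α) (b : α) : ℕ := #{w ∈ M | r b w}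

theorem rank_lt_card (ht : IsTournament r) (hb : b ∈ M) : rank r M b < #M :=
  card_lt_card (filter_ssubset.2 ⟨b, hb, ht.irrefl b⟩)

namespace IsTransOn

theorem rank_lt_rank (ht : IsTournament r) (hM : IsTransOn r M) (hb : b ∈ M) (hb' : b' ∈ M)
    (h : r b b') : rank r M b' < rank r M b := by
  refine card_lt_card ((ssubset_iff_of_subset fun w hw => ?_).2 ⟨b', ?_, ?_⟩)
  · rw [mem_filter] at hw ⊢
    exact ⟨hw.1, hM b hb b' hb' w hw.1 h hw.2⟩
  · exact mem_filter.2 ⟨hb', h⟩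
  · exact fun hw => ht.irrefl b' (mem_filter.1 hw).2

theorem rel_iff_rank_lt (ht : IsTournament r) (hM : IsTransOn r M) (hb : b ∈ M) (hb' : b' ∈ M)
    (hne : b ≠ b') : r b b' ↔ rank r M b' < rank r M b := by
  refine ⟨hM.rank_lt_rank ht hb hb', fun hlt => ?_⟩
  rcases ht.total hne with h | h
  · exact h
  · exact absurd (hM.rank_lt_rank ht hb' hb h) (by omega)

theorem rank_injOn (ht : IsTournament r) (hM : IsTransOn r M) : Set.InjOn (rank r M) M := by
  intro b hb b' hb' heq
  by_contra hne
  rcases ht.total hne with h | h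
  · exact absurd (hM.rank_lt_rank ht hb hb' h) (by omega)
  · exact absurd (hM.rank_lt_rank ht hb' hb h) (by omega)

theorem exists_rank_eq (ht : IsTournament r) (hM : IsTransOn r M) {t : ℕ} (htM : t < #M) :
    ∃ b ∈ M, rank r M b = t := by
  have himage : M.image (rank r M) = range #M := by
    refine eq_of_subset_of_card_le (fun x hx => ?_) ?_
    · obtain ⟨b, hb, rfl⟩ := mem_image.1 hx
      exact mem_range.2 (rank_lt_card ht hb)
    · rw [card_range, card_image_of_injOn (hM.rank_injOn ht)]
  exact mem_image.1 (himage ▸ mem_range.2 htM)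

theorem exists_interior [DecidableEq α] (ht : IsTournament r) (hM : IsTransOn r M) :
    ∃ I ⊆ M, #M ≤ #I + 2 ∧ ∀ a ∈ I, 0 < rank r M a ∧ rank r M a + 1 < #M := by
  rcases M.eq_empty_or_nonempty with rfl | hne
  · exact ⟨∅, subset_refl _, by simp, by simp⟩
  obtain ⟨bot, hbot, hbot0⟩ := hM.exists_rank_eq ht hne.card_pos
  obtain ⟨top, htop, htop1⟩ := hM.exists_rank_eq ht (Nat.sub_lt hne.card_pos one_pos)
  refine ⟨(M.erase bot).erase top, (erase_subset _ _).trans (erase_subset _ _), ?_,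
    fun a ha => ?_⟩
  · have := pred_card_le_card_erase (s := M.erase bot) (a := top)
    have := pred_card_le_card_erase (s := M) (a := bot)
    omega
  · obtain ⟨hatop, habot, haM⟩ : a ≠ top ∧ a ≠ bot ∧ a ∈ M := by simpa using ha
    have h0 : rank r M a ≠ 0 := fun h => habot (hM.rank_injOn ht haM hbot (h.trans hbot0.symm))
    have h1 : rank r M a ≠ #M - 1 :=
      fun h => hatop (hM.rank_injOn ht haM htop (h.trans htop1.symm))
    have := rank_lt_card ht haM
    omega

theorem isTwin_of_rank_eq_add_one (ht : IsTournament r) (hM : IsTransOn r M)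
    (hmod : IsModule r M) (ha : a ∈ M) (hb : b ∈ M) (h : rank r M b = rank r M a + 1) :
    IsTwin r a b := by
  intro w hwa hwb
  by_cases hw : w ∈ M
  · have hwa' : rank r M w ≠ rank r M a := fun h => hwa (hM.rank_injOn ht hw ha h)
    have hwb' : rank r M w ≠ rank r M b := fun h => hwb (hM.rank_injOn ht hw hb h)
    rw [hM.rel_iff_rank_lt ht ha hw hwa.symm, hM.rel_iff_rank_lt ht hb hw hwb.symm]
    omega
  · exact (hmod w hw).rel_iff ht ha hb

theorem mem_of_isTwin (ht : IsTournament r) (hM : IsTransOn r M) (hmod : IsModule r M)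
    {v : α} (ha : a ∈ M) (h0 : 0 < rank r M a) (h1 : rank r M a + 1 < #M) (hv : IsTwin r a v)
    (hva : v ≠ a) : v ∈ M := by
  by_contra hvM
  obtain ⟨above, habove, habove_rank⟩ := hM.exists_rank_eq ht h1
  obtain ⟨below, hbelow, hbelow_rank⟩ := hM.exists_rank_eq ht (t := rank r M a - 1) (by omega)
  have hne_above : above ≠ a := by rintro rfl; omega
  have hne_below : below ≠ a := by rintro rfl; omega
  rcases hmod v hvM with hv' | hv'
  · have hab : r a above := (hv above hne_above fun h => hvM (h ▸ habove)).2 (hv' above habove)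
    rw [hM.rel_iff_rank_lt ht ha habove hne_above.symm] at hab
    omega
  · have hab : r a below := (hM.rel_iff_rank_lt ht ha hbelow hne_below.symm).2 (by omega)
    exact ht.asymm (hv' below hbelow) ((hv below hne_below fun h => hvM (h ▸ hbelow)).1 hab)

end IsTransOn

end Rank

theorem Nat.forall_lt_of_interior_step {N a : ℕ} {P : ℕ → Prop} (h0 : 0 < a) (h1 : a + 1 < N)
    (ha : P a) (step : ∀ t, 0 < t → t + 1 < N → P t → P (t + 1) ∧ P (t - 1)) :
    ∀ t < N, P t := by
  have up : ∀ d, a + d < N → P (a + d) := by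
    intro d
    induction d with
    | zero => exact fun _ => ha
    | succ d ih => exact fun hd => (step _ (by omega) (by omega) (ih (by omega))).1
  have down : ∀ d ≤ a, P (a - d) := by
    intro d
    induction d with
    | zero => exact fun _ => ha
    | succ d ih =>
      intro hd
      simpa [Nat.sub_sub] using (step _ (by omega) (by omega) (ih (by omega))).2
  intro t ht
  rcases le_or_gt a t with h | h
  · simpa [Nat.add_sub_cancel' h] using up (t - a) (by omega)
  · simpa [Nat.sub_sub_self h.le] using down (a - t) (by omega)

section Score

variable [Fintype α] [DecidableRel r] {M : Finset α} {a b b' : α}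

def score (r : α → α → Prop) [DecidableRel r] (v : α) : ℕ := #{w | r v w}

theorem score_relIso (g : r ≃r r) (v : α) : score r (g v) = score r v :=
  (card_equiv g.toEquiv fun w => by simp [g.map_rel_iff]).symm

variable [DecidableEq α]

theorem rank_add_card_filter_compl (M : Finset α) (b : α) :
    rank r M b + #{w ∈ Mᶜ | r b w} = score r b := by
  simp only [rank, score, card_filter]
  exact sum_add_sum_compl M _

theorem IsModule.score_add_rank_eq (ht : IsTournament r) (hmod : IsModule r M) (hb : b ∈ M)
    (hb' : b' ∈ M) : score r b + rank r M b' = score r b' + rank r M b := by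
  have hout : #{w ∈ Mᶜ | r b w} = #{w ∈ Mᶜ | r b' w} :=
    congrArg card <| filter_congr fun w hw => (hmod w (mem_compl.1 hw)).rel_iff ht hb hb'
  rw [← rank_add_card_filter_compl M b, ← rank_add_card_filter_compl M b', hout]
  ring

namespace IsTransOn

theorem relIso_apply_eq_self_of_mem (ht : IsTournament r) (hM : IsTransOn r M)
    (hmod : IsModule r M) (g : r ≃r r) (hb : b ∈ M) (hgb : g b ∈ M) : g b = b := by
  refine hM.rank_injOn ht hgb hb ?_
  have := hmod.score_add_rank_eq ht hb hgb
  rw [score_relIso] at this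
  omega

theorem relIso_apply_eq_self_of_isTwin (ht : IsTournament r) (hM : IsTransOn r M)
    (hmod : IsModule r M) (g : r ≃r r) (ha : a ∈ M) (h0 : 0 < rank r M a)
    (h1 : rank r M a + 1 < #M) (hga : g a = a) (hb : b ∈ M) (hab : IsTwin r a b) (hba : b ≠ a) :
    g b = b := by
  have htwin : IsTwin r a (g b) := hga ▸ hab.relIso g
  have hgba : g b ≠ a := fun h => hba (g.injective (h.trans hga.symm))
  exact hM.relIso_apply_eq_self_of_mem ht hmod g hb (hM.mem_of_isTwin ht hmod ha h0 h1 htwin hgba)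

theorem relIso_apply_eq_self (ht : IsTournament r) (hM : IsTransOn r M) (hmod : IsModule r M)
    (g : r ≃r r) (ha : a ∈ M) (h0 : 0 < rank r M a) (h1 : rank r M a + 1 < #M)
    (hga : g a = a) : ∀ b ∈ M, g b = b := by
  have hall := Nat.forall_lt_of_interior_step (P := fun t => ∀ b ∈ M, rank r M b = t → g b = b)
    h0 h1 (fun b hb hrank => by rw [hM.rank_injOn ht hb ha hrank, hga]) fun t ht0 ht1 hP => by
      obtain ⟨c, hc, rfl⟩ := hM.exists_rank_eq ht (t := t) (by omega)
      have hgc := hP c hc rfl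
      refine ⟨fun b hb hrank => ?_, fun b hb hrank => ?_⟩
      · exact hM.relIso_apply_eq_self_of_isTwin ht hmod g hc ht0 ht1 hgc hb
          (hM.isTwin_of_rank_eq_add_one ht hmod hc hb hrank) (by rintro rfl; omega)
      · exact hM.relIso_apply_eq_self_of_isTwin ht hmod g hc ht0 ht1 hgc hb
          (hM.isTwin_of_rank_eq_add_one ht hmod hb hc (by omega)).symm (by rintro rfl; omega)
  exact fun b hb => hall _ (rank_lt_card ht hb) b hb rfl

end IsTransOn

end Score

theorem Function.Injective.mem_of_apply_mem {g : α → α} (hg : g.Injective) {S : Finset α}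
    (hS : ∀ b ∈ S, g b = b) {v : α} (hv : g v ∈ S) : v ∈ S := by
  rwa [← hg (hS _ hv)]

namespace IsBlockFrame

variable [DecidableEq α] {U : Finset α} {M : ℕ → Finset α} {m : ℕ}

theorem subtype (hF : IsBlockFrame r U M m) (V : Finset α) :
    IsBlockFrame (fun a b : V => r a b) (U.subtype (· ∈ V)) (fun q => (M q).subtype (· ∈ V)) m where
  disjoint_base q hq := disjoint_left.2 fun v hvU hvM =>
    disjoint_left.1 (hF.disjoint_base q hq) (mem_subtype.1 hvU) (mem_subtype.1 hvM)
  pairwiseDisjoint i hi j hj hij := disjoint_left.2 fun v hvi hvj =>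
    disjoint_left.1 (hF.pairwiseDisjoint hi hj hij) (mem_subtype.1 hvi) (mem_subtype.1 hvj)
  isTransOn q hq a ha b hb c hc :=
    hF.isTransOn q hq a (mem_subtype.1 ha) b (mem_subtype.1 hb) c (mem_subtype.1 hc)
  isUniform q hq v hv hvq := by
    refine (hF.isUniform q hq v ?_ (mt mem_subtype.2 hvq)).imp
      (fun h b hb => h b (mem_subtype.1 hb)) (fun h b hb => h b (mem_subtype.1 hb))
    rcases mem_union.1 hv with h | h
    · exact mem_union_left _ (mem_subtype.1 h)
    · obtain ⟨i, hi, hvi⟩ := mem_biUnion.1 h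
      exact mem_union_right _ (mem_biUnion.2 ⟨i, hi, mem_subtype.1 hvi⟩)

section Rigidity

variable [DecidableRel r]

theorem exists_interior_relIso_apply_mem (ht : IsTournament r) (hF : IsBlockFrame r U M m)
    (hcover : ∀ v, v ∈ U ∪ (range m).biUnion M)
    (hcard : ∀ q < m, #U + ∑ i ∈ range q, #(M i) + 3 ≤ #(M q)) (g : r ≃r r) {q : ℕ}
    (hq : q < m) (hhigher : ∀ i, q < i → i < m → ∀ b ∈ M i, g b = b) :
    ∃ a ∈ M q, 0 < rank r (M q) a ∧ rank r (M q) a + 1 < #(M q) ∧ g a ∈ M q := by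
  obtain ⟨I, hIM, hIcard, hIint⟩ := (hF.isTransOn q hq).exists_interior ht
  by_contra! hout
  have hmaps : Set.MapsTo g I ↑(U ∪ (range q).biUnion M) := by
    intro a ha
    have hga := hout a (hIM ha) (hIint a ha).1 (hIint a ha).2
    rcases mem_union.1 (hcover (g a)) with hU | hM
    · exact mem_union_left _ hU
    obtain ⟨i, hi, hgai⟩ := mem_biUnion.1 hM
    rw [mem_range] at hi
    rcases lt_trichotomy i q with hiq | rfl | hiq
    · exact mem_union_right _ (mem_biUnion.2 ⟨i, mem_range.2 hiq, hgai⟩)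
    · exact absurd hgai hga
    · exact absurd (g.injective.mem_of_apply_mem (hhigher i hiq hi) hgai)
        (disjoint_left.1 (hF.disjoint hq hi hiq.ne) (hIM ha))
  have hlt : #(U ∪ (range q).biUnion M) < #I :=
    calc #(U ∪ (range q).biUnion M) ≤ #U + ∑ i ∈ range q, #(M i) :=
          (card_union_le _ _).trans (Nat.add_le_add_left card_biUnion_le _)
      _ < #I := by have := hcard q hq; omega
  obtain ⟨a, _, b, _, hab, hgab⟩ := exists_ne_map_eq_of_card_lt_of_maps_to hlt hmaps
  exact hab (g.injective hgab)

variable [Fintype α]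

theorem relIso_apply_eq_self_of_mem_block (ht : IsTournament r) (hF : IsBlockFrame r U M m)
    (hcover : ∀ v, v ∈ U ∪ (range m).biUnion M)
    (hcard : ∀ q < m, #U + ∑ i ∈ range q, #(M i) + 3 ≤ #(M q)) (g : r ≃r r) :
    ∀ q < m, ∀ b ∈ M q, g b = b := by
  intro q hq
  induction hd : m - q using Nat.strong_induction_on generalizing q with
  | _ d ih =>
    obtain ⟨a, ha, h0, h1, hga⟩ := hF.exists_interior_relIso_apply_mem ht hcover hcard g hq
      fun i hqi hi => ih (m - i) (by omega) i hi rfl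
    have hmod := hF.isModule hcover hq
    exact (hF.isTransOn q hq).relIso_apply_eq_self ht hmod g ha h0 h1
      ((hF.isTransOn q hq).relIso_apply_eq_self_of_mem ht hmod g ha hga)

theorem relIso_apply_eq_self (ht : IsTournament r) (hF : IsBlockFrame r U M m)
    (hcover : ∀ v, v ∈ U ∪ (range m).biUnion M)
    (hcard : ∀ q < m, #U + ∑ i ∈ range q, #(M i) + 3 ≤ #(M q))
    (hsep : ∀ u ∈ U, ∀ u' ∈ U, u ≠ u' → ∃ q < m, ∀ b ∈ M q, r u b ∧ r b u')
    (g : r ≃r r) (v : α) : g v = v := by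
  have hblock := hF.relIso_apply_eq_self_of_mem_block ht hcover hcard g
  rcases mem_union.1 (hcover v) with hvU | hvM
  · have hgvU : g v ∈ U := by
      rcases mem_union.1 (hcover (g v)) with h | h
      · exact h
      obtain ⟨q, hq, hgvq⟩ := mem_biUnion.1 h
      rw [mem_range] at hq
      exact absurd (g.injective.mem_of_apply_mem (hblock q hq) hgvq)
        (disjoint_left.1 (hF.disjoint_base q hq) hvU)
    by_contra hne
    obtain ⟨q, hq, hsepq⟩ := hsep v hvU (g v) hgvU (Ne.symm hne)
    obtain ⟨b, hb⟩ : (M q).Nonempty := card_pos.1 (by have := hcard q hq; omega)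
    have hgvb : r (g v) (g b) := g.map_rel_iff.2 (hsepq b hb).1
    rw [hblock q hq b hb] at hgvb
    exact ht.asymm (hsepq b hb).2 hgvb
  · obtain ⟨q, hq, hvq⟩ := mem_biUnion.1 hvM
    exact hblock q (mem_range.1 hq) v hvq

end Rigidity

theorem eq_of_forall_rel_iff (ht : IsTournament r) (hF : IsBlockFrame r U M m)
    (hcard : ∀ q < m, #U + ∑ i ∈ range q, #(M i) + 3 ≤ #(M q))
    (hsep : ∀ u ∈ U, ∀ u' ∈ U, u ≠ u' → ∃ q < m, ∀ b ∈ M q, r u b ∧ r b u')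
    (f : {x // x ∈ U ∪ (range m).biUnion M} ≃ {x // x ∈ U ∪ (range m).biUnion M})
    (hf : ∀ a b : {x // x ∈ U ∪ (range m).biUnion M}, r a b ↔ r (f a) (f b))
    (a : {x // x ∈ U ∪ (range m).biUnion M}) : f a = a := by
  classical
  let V := U ∪ (range m).biUnion M
  have hcard_subtype : ∀ {t}, t ⊆ V → #(t.subtype (· ∈ V)) = #t := fun htV => by
    rw [card_subtype, filter_true_of_mem htV]
  have hMV : ∀ q < m, M q ⊆ V := fun q hq =>
    (subset_biUnion_of_mem M (mem_range.2 hq)).trans subset_union_right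
  refine (hF.subtype V).relIso_apply_eq_self (ht.comap Subtype.val_injective) (fun v => ?_)
    (fun q hq => ?_) (fun u hu u' hu' hne => ?_) ⟨f, (hf _ _).symm⟩ a
  · rcases mem_union.1 v.2 with h | h
    · exact mem_union_left _ (mem_subtype.2 h)
    · obtain ⟨q, hq, hvq⟩ := mem_biUnion.1 h
      exact mem_union_right _ (mem_biUnion.2 ⟨q, hq, mem_subtype.2 hvq⟩)
  · rw [hcard_subtype subset_union_left, hcard_subtype (hMV q hq),
      sum_congr rfl fun i hi => hcard_subtype (hMV i ((mem_range.1 hi).trans hq))]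
    exact hcard q hq
  · obtain ⟨q, hq, h⟩ := hsep u (mem_subtype.1 hu) u' (mem_subtype.1 hu')
      (Subtype.coe_injective.ne hne)
    exact ⟨q, hq, fun b hb => h b (mem_subtype.1 hb)⟩

end IsBlockFrame

end

theorem stmt15_general {X : Type*} (r : X → X → Prop) (ht : IsTournament r)
    (hdiff : ∀ x y : X, x ≠ y →
      ({v | r x v} \ {v | r y v} : Set X).Infinite ∧
      ({v | r y v} \ {v | r x v} : Set X).Infinite) :
    ∀ U : Finset X, ∃ V : Finset X, U ⊆ V ∧
      ∀ f : {x // x ∈ V} ≃ {x // x ∈ V},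
        (∀ a b : {x // x ∈ V}, r (a : X) (b : X) ↔ r (f a : X) (f b : X)) →
        ∀ a : {x // x ∈ V}, f a = a := by
  classical
  intro U
  obtain ⟨M, m, hF, hcard, hsep⟩ := exists_isBlockFrame ht U U.offDiag
    (fun p hp => setOf_rel_rel_infinite ht (hdiff p.1 p.2 (Finset.mem_offDiag.1 hp).2.2).1) 1
  exact ⟨U ∪ (Finset.range m).biUnion M, Finset.subset_union_left, hF.eq_of_forall_rel_iff ht
    (fun q hq => by simpa using hcard q hq)
    (fun u hu u' hu' hne => hsep (u, u') (Finset.mem_offDiag.2 ⟨hu, hu', hne⟩))⟩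

/-- an infinite tournament in which Γ⁺(x) \ Γ⁺(y) and Γ⁺(y) \ Γ⁺(x) are
    infinite for all distinct x, y is cofinally rigid. -/
theorem stmt15 {X : Type*} [Infinite X] (r : X → X → Prop) (ht : IsTournament r)
    (hdiff : ∀ x y : X, x ≠ y →
      ({v | r x v} \ {v | r y v} : Set X).Infinite ∧
      ({v | r y v} \ {v | r x v} : Set X).Infinite) :
    ∀ U : Finset X, ∃ V : Finset X, U ⊆ V ∧
      ∀ f : {x // x ∈ V} ≃ {x // x ∈ V},
        (∀ a b : {x // x ∈ V}, r (a : X) (b : X) ↔ r (f a : X) (f b : X)) →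
        ∀ a : {x // x ∈ V}, f a = a :=
  stmt15_general r ht hdiff
end
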